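/- arXiv:1604.06513 — 2 statements merged into one kernel-verified Lean document; each statement's English description precedes it below -/
import Mathlib

section
/- The Ramsey number of the star S_n equals 2n-1 when n is even and 2n when n is odd (for n ≥ 1). -/
open SimpleGraph

/-- The graph of edges of color `b` in the 2-coloring `c` of a complete graph. -/
def colorGraph {V : Type*} (c : Sym2 V → Bool) (b : Bool) : SimpleGraph V :=
  SimpleGraph.fromRel (fun u v => c s(u, v) = b)

/-- `G` occurs as a (not nec. induced) subgraph of `H`. -/
def ContainsCopy {V W : Type*} (G : SimpleGraph V) (H : SimpleGraph W) : Prop :=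
  ∃ f : V → W, Function.Injective f ∧ ∀ ⦃u v : V⦄, G.Adj u v → H.Adj (f u) (f v)

/-- The coloring `c` contains a monochromatic copy of `G`. -/
def HasMonoCopy {V W : Type*} (G : SimpleGraph V) (c : Sym2 W → Bool) : Prop :=
  ∃ b : Bool, ContainsCopy G (colorGraph c b)

/-- The (diagonal) Ramsey number of a graph `G`. -/
noncomputable def ramseyNumber {V : Type*} (G : SimpleGraph V) : ℕ :=
  sInf {r : ℕ | ∀ c : Sym2 (Fin r) → Bool, HasMonoCopy G c}

/-- The star `S n = K_{1,n}`: center `0`, `n` leaves. -/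
def starGraph (n : ℕ) : SimpleGraph (Fin (n + 1)) :=
  SimpleGraph.fromRel (fun u v => u = 0)

/-- The bistar `B(m,n)`: adjacent centers `inl 0`, `inl 1`, with `m` resp. `n` leaves. -/
def bistar (m n : ℕ) : SimpleGraph (Fin 2 ⊕ Fin m ⊕ Fin n) :=
  SimpleGraph.fromRel (fun u v =>
    (u = Sum.inl 0 ∧ v = Sum.inl 1) ∨
    (u = Sum.inl 0 ∧ ∃ i, v = Sum.inr (Sum.inl i)) ∨
    (u = Sum.inl 1 ∧ ∃ j, v = Sum.inr (Sum.inr j)))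

/-!
Identify a 2-coloring of `K_r` with the graph `H` of its `true` edges, so that the other color
class is `Hᶜ`; then `K_{1,n}` is monochromatic iff some vertex has degree at least `n` in `H` or
in `Hᶜ`, and these two degrees add up to `r - 1`. For `r = 2n` one of them is at least `n`. For
`r = 2n - 1` with `n` even, avoiding both would make `H` an `(n - 1)`-regular graph with an odd
number of vertices and odd degree, contradicting the handshake lemma. Conversely, on `ℤ/r` with
`r = 2n - 1` (`n` odd) or `r = 2n - 2` (`n` even) the circulant graph with jumps
`±1, …, ±⌊(n - 1)/2⌋` and its complement both have all degrees below `n`.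
-/

section Coloring

variable {V W : Type*}

lemma colorGraph_adj (c : Sym2 V → Bool) (b : Bool) (u v : V) :
    (colorGraph c b).Adj u v ↔ u ≠ v ∧ c s(u, v) = b := by
  rw [colorGraph, fromRel_adj, Sym2.eq_swap, or_self]

lemma colorGraph_false (c : Sym2 V → Bool) :
    colorGraph c false = (colorGraph c true)ᶜ := by
  ext u v
  simp only [colorGraph_adj, compl_adj]
  cases c s(u, v) <;> simp

lemma colorGraph_decide_mem_edgeSet (H : SimpleGraph V) [DecidableRel H.Adj] :
    colorGraph (fun e => decide (e ∈ H.edgeSet)) true = H := by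
  ext u v
  simpa [colorGraph_adj] using fun h : H.Adj u v => h.ne

lemma hasMonoCopy_iff_containsCopy_or_compl (G : SimpleGraph V) (c : Sym2 W → Bool) :
    HasMonoCopy G c ↔
      ContainsCopy G (colorGraph c true) ∨ ContainsCopy G (colorGraph c true)ᶜ := by
  rw [HasMonoCopy, Bool.exists_bool, colorGraph_false, or_comm]

lemma forall_hasMonoCopy_iff (G : SimpleGraph V) :
    (∀ c : Sym2 W → Bool, HasMonoCopy G c) ↔
      ∀ H : SimpleGraph W, ContainsCopy G H ∨ ContainsCopy G Hᶜ := by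
  classical
  refine ⟨fun h H => ?_, fun h c => (hasMonoCopy_iff_containsCopy_or_compl G c).2 (h _)⟩
  simpa only [hasMonoCopy_iff_containsCopy_or_compl, colorGraph_decide_mem_edgeSet] using
    h fun e => decide (e ∈ H.edgeSet)

lemma HasMonoCopy.of_comp_map {X : Type*} {G : SimpleGraph V} (g : W ↪ X)
    {c : Sym2 X → Bool} (h : HasMonoCopy G (c ∘ Sym2.map g)) : HasMonoCopy G c := by
  obtain ⟨b, f, hf, hadj⟩ := h
  refine ⟨b, g ∘ f, g.injective.comp hf, fun u v huv => ?_⟩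
  have := hadj huv
  rw [colorGraph_adj] at this ⊢
  exact ⟨g.injective.ne this.1, this.2⟩

lemma ramseyNumber_eq_succ [Fintype W] {G : SimpleGraph V} {r : ℕ}
    (hup : ∀ c : Sym2 (Fin (r + 1)) → Bool, HasMonoCopy G c) (hW : Fintype.card W = r)
    (hlow : ¬ ∀ c : Sym2 W → Bool, HasMonoCopy G c) : ramseyNumber G = r + 1 := by
  refine le_antisymm (Nat.sInf_le hup) (le_csInf ⟨_, hup⟩ fun s hs => ?_)
  by_contra! hsr
  let g : Fin s ↪ W :=
    (Fin.castLEEmb (Nat.le_of_lt_succ hsr)).trans (Fintype.equivFinOfCardEq hW).symm.toEmbedding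
  exact hlow fun c => (hs (c ∘ Sym2.map g)).of_comp_map g

end Coloring

namespace SimpleGraph

variable {W : Type*} [Fintype W] (H : SimpleGraph W) [DecidableRel H.Adj]

lemma degree_add_degree_compl [DecidableEq W] (v : W) :
    H.degree v + Hᶜ.degree v + 1 = Fintype.card W := by
  have := H.degree_lt_card_verts v
  rw [degree_compl]
  omega

lemma even_card_of_forall_odd_degree (hodd : ∀ v, Odd (H.degree v)) : Even (Fintype.card W) := by
  simpa [hodd] using H.even_card_odd_degree_vertices

lemma degree_circulantGraph {G : Type*} [AddGroup G] [Fintype G] [DecidableEq G] {s : Finset G}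
    (hneg : ∀ x ∈ s, -x ∈ s) (hzero : 0 ∉ s) (v : G) :
    (circulantGraph (s : Set G)).degree v = s.card := by
  have hnbr : (circulantGraph (s : Set G)).neighborFinset v =
      s.map (Equiv.addRight v).toEmbedding := by
    ext u
    simp only [mem_neighborFinset, circulantGraph_adj, Finset.mem_coe, Finset.mem_map_equiv,
      Equiv.coe_addRight, Equiv.addRight_symm, ← sub_eq_add_neg]
    constructor
    · rintro ⟨-, h | h⟩
      · simpa using hneg _ h
      · exact h
    · intro h
      exact ⟨fun hvu => hzero (by simpa [hvu] using h), .inr h⟩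
  rw [← card_neighborFinset_eq_degree, hnbr, Finset.card_map]

end SimpleGraph

lemma starGraph_eq_starGraph_zero (n : ℕ) : _root_.starGraph n = SimpleGraph.starGraph 0 := rfl

section Star

variable {W : Type*} [Fintype W]

lemma containsCopy_starGraph_iff (H : SimpleGraph W) [DecidableRel H.Adj] (n : ℕ) :
    ContainsCopy (_root_.starGraph n) H ↔ ∃ v, n ≤ H.degree v := by
  rw [starGraph_eq_starGraph_zero]
  constructor
  · rintro ⟨f, hf, hadj⟩
    let leaf (i : Fin n) : H.neighborSet (f 0) :=
      ⟨f i.succ, hadj (starGraph_center_adj (Fin.succ_ne_zero i).symm)⟩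
    refine ⟨f 0, ?_⟩
    calc n = Fintype.card (Fin n) := (Fintype.card_fin n).symm
      _ ≤ Fintype.card (H.neighborSet (f 0)) := Fintype.card_le_of_injective leaf
          fun i j hij => Fin.succ_injective _ (hf (congrArg Subtype.val hij))
      _ = H.degree (f 0) := card_neighborSet_eq_degree ..
  · rintro ⟨v, hv⟩
    obtain ⟨e⟩ := Function.Embedding.nonempty_of_card_le (α := Fin n) (β := H.neighborSet v)
      (by rwa [Fintype.card_fin, card_neighborSet_eq_degree])
    refine ⟨Fin.cons v fun i => e i, Fin.cons_injective_iff.2 ⟨?_, ?_⟩, ?_⟩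
    · rintro ⟨i, hi⟩
      exact H.ne_of_adj (e i).2 hi.symm
    · exact Subtype.val_injective.comp e.injective
    · intro i j hij
      obtain ⟨hne, rfl | rfl⟩ := starGraph_adj.1 hij
      · obtain ⟨j, rfl⟩ := Fin.exists_succ_eq_of_ne_zero hne.symm
        exact (e j).2
      · obtain ⟨i, rfl⟩ := Fin.exists_succ_eq_of_ne_zero hne
        exact ((e i).2).symm

lemma containsCopy_starGraph_or_compl_of_two_mul_le_card [Nonempty W] (H : SimpleGraph W)
    {n : ℕ} (hW : 2 * n ≤ Fintype.card W) :
    ContainsCopy (_root_.starGraph n) H ∨ ContainsCopy (_root_.starGraph n) Hᶜ := by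
  classical
  obtain ⟨v⟩ := ‹Nonempty W›
  have := H.degree_add_degree_compl v
  simp only [containsCopy_starGraph_iff]
  by_cases hv : n ≤ H.degree v
  · exact .inl ⟨v, hv⟩
  · exact .inr ⟨v, by omega⟩

lemma containsCopy_starGraph_or_compl_of_even (H : SimpleGraph W) {n : ℕ} (hn : Even n)
    (hW : Fintype.card W + 1 = 2 * n) :
    ContainsCopy (_root_.starGraph n) H ∨ ContainsCopy (_root_.starGraph n) Hᶜ := by
  classical
  by_contra! hfree
  simp only [containsCopy_starGraph_iff, not_exists, not_le] at hfree
  have hreg (v : W) : H.degree v = n - 1 := by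
    have := H.degree_add_degree_compl v
    have := hfree.1 v
    have := hfree.2 v
    omega
  obtain ⟨k, hk⟩ := H.even_card_of_forall_odd_degree fun v =>
    hreg v ▸ Nat.Even.sub_odd (by omega) hn odd_one
  omega

end Star

lemma ZMod.intCast_injOn_Icc {m h : ℕ} (hm : 2 * h < m) :
    Set.InjOn (Int.cast : ℤ → ZMod m) (Set.Icc (-h) h) := by
  intro a ha b hb hab
  rw [ZMod.intCast_eq_intCast_iff_dvd_sub] at hab
  have := Int.eq_zero_of_abs_lt_dvd hab (by rw [abs_lt]; grind)
  omega

noncomputable def intervalJumps (m h : ℕ) : Finset (ZMod m) :=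
  ((Finset.Icc (-h : ℤ) h).erase 0).image (↑)

lemma neg_mem_intervalJumps {m h : ℕ} {x : ZMod m} (hx : x ∈ intervalJumps m h) :
    -x ∈ intervalJumps m h := by
  simp only [intervalJumps, Finset.mem_image, Finset.mem_erase, Finset.mem_Icc] at hx ⊢
  obtain ⟨a, ⟨ha0, ha⟩, rfl⟩ := hx
  exact ⟨-a, ⟨neg_ne_zero.2 ha0, by omega, by omega⟩, by push_cast; rfl⟩

lemma zero_notMem_intervalJumps {m h : ℕ} (hm : 2 * h < m) : 0 ∉ intervalJumps m h := by
  simp only [intervalJumps, Finset.mem_image, Finset.mem_erase, Finset.mem_Icc, not_exists]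
  rintro a ⟨⟨ha0, ha⟩, h0⟩
  exact ha0 (ZMod.intCast_injOn_Icc hm ha (by simp) (by simpa using h0))

lemma card_intervalJumps {m h : ℕ} (hm : 2 * h < m) : (intervalJumps m h).card = 2 * h := by
  rw [intervalJumps, Finset.card_image_of_injOn ((ZMod.intCast_injOn_Icc hm).mono (by simp)),
    Finset.card_erase_of_mem (by simp), Int.card_Icc]
  omega

lemma not_containsCopy_starGraph_circulantGraph_or_compl {m h n : ℕ} [NeZero m] (hm : 2 * h < m)
    (hn : 2 * h < n) (hmn : m ≤ n + 2 * h) :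
    let C := circulantGraph (intervalJumps m h : Set (ZMod m))
    ¬ (ContainsCopy (_root_.starGraph n) C ∨ ContainsCopy (_root_.starGraph n) Cᶜ) := by
  intro C
  have hdeg (v : ZMod m) : C.degree v = 2 * h := by
    rw [degree_circulantGraph (fun _ => neg_mem_intervalJumps) (zero_notMem_intervalJumps hm),
      card_intervalJumps hm]
  simp only [containsCopy_starGraph_iff, not_or, not_exists, not_le]
  refine ⟨fun v => hdeg v ▸ hn, fun v => ?_⟩
  have := C.degree_add_degree_compl v
  rw [hdeg, ZMod.card] at this
  omega

lemma ramseyNumber_starGraph_eq_succ {n r h : ℕ} [NeZero r]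
    (hup : ∀ H : SimpleGraph (Fin (r + 1)),
      ContainsCopy (_root_.starGraph n) H ∨ ContainsCopy (_root_.starGraph n) Hᶜ)
    (hr : 2 * h < r) (hn : 2 * h < n) (hrn : r ≤ n + 2 * h) :
    ramseyNumber (_root_.starGraph n) = r + 1 :=
  ramseyNumber_eq_succ ((forall_hasMonoCopy_iff _).2 hup) (ZMod.card r) fun hall =>
    not_containsCopy_starGraph_circulantGraph_or_compl hr hn hrn
      ((forall_hasMonoCopy_iff _).1 hall _)

theorem star_ramsey (n : ℕ) (hn : 1 ≤ n) :
    ramseyNumber (_root_.starGraph n) = if Even n then 2 * n - 1 else 2 * n := by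
  rcases Nat.even_or_odd' n with ⟨k, rfl | rfl⟩
  · obtain ⟨j, rfl⟩ : ∃ j, k = j + 1 := ⟨k - 1, by omega⟩
    rw [if_pos (even_two_mul _), show 2 * (2 * (j + 1)) - 1 = (4 * j + 2) + 1 by omega]
    exact ramseyNumber_starGraph_eq_succ (h := j)
      (fun H => containsCopy_starGraph_or_compl_of_even H (even_two_mul _)
        (by rw [Fintype.card_fin]; omega))
      (by omega) (by omega) (by omega)
  · rw [if_neg (Nat.not_even_iff_odd.2 (odd_two_mul_add_one k)),
      show 2 * (2 * k + 1) = (4 * k + 1) + 1 by omega]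
    exact ramseyNumber_starGraph_eq_succ (h := k)
      (fun H => containsCopy_starGraph_or_compl_of_two_mul_le_card H
        (by rw [Fintype.card_fin]; omega))
      (by omega) (by omega) (by omega)
end

section
/- Let m ≤ n and R ≥ 2m+n+2. If a 2-coloring of the edges of K_R contains no monochromatic copy of the bistar B(m,n), then every vertex v satisfies R - m - n - 1 ≤ d_b(v) ≤ m+n and R - m - n - 1 ≤ d_r(v) ≤ m+n. -/
open SimpleGraph

/-- The `b`-colored neighborhood of `v`. -/
def nbhd {R : ℕ} (c : Sym2 (Fin R) → Bool) (v : Fin R) (b : Bool) : Finset (Fin R) :=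
  Finset.univ.filter (fun u => u ≠ v ∧ c s(v, u) = b)

lemma mem_nbhd {R : ℕ} (c : Sym2 (Fin R) → Bool) (v u : Fin R) (b : Bool) :
    u ∈ nbhd c v b ↔ u ≠ v ∧ c s(v, u) = b := by
  simp [nbhd]

lemma nbhd_sum {R : ℕ} (c : Sym2 (Fin R) → Bool) (v : Fin R) (b : Bool) :
    (nbhd c v b).card + (nbhd c v (!b)).card = R - 1 := by
  classical
  have h1 : nbhd c v b
      = (Finset.univ.filter (fun u : Fin R => u ≠ v)).filter (fun u => c s(v, u) = b) := by
    rw [Finset.filter_filter]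
    rfl
  have h2 : nbhd c v (!b)
      = (Finset.univ.filter (fun u : Fin R => u ≠ v)).filter (fun u => ¬ c s(v, u) = b) := by
    rw [Finset.filter_filter]
    apply Finset.filter_congr
    intro u _
    constructor
    · rintro ⟨h, h'⟩; exact ⟨h, by simp [h']⟩
    · rintro ⟨h, h'⟩
      refine ⟨h, ?_⟩
      cases hb : c s(v, u) <;> cases b <;> simp_all
  rw [h1, h2, Finset.card_filter_add_card_filter_not]
  have : (Finset.univ.filter (fun u : Fin R => u ≠ v)) = Finset.univ.erase v := by
    ext u; simp [Finset.mem_erase]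
  rw [this, Finset.card_erase_of_mem (Finset.mem_univ v)]
  simp

lemma colorGraph_adj' {V : Type*} (c : Sym2 V → Bool) (b : Bool) (p q : V)
    (h1 : p ≠ q) (h2 : c s(p, q) = b) : (colorGraph c b).Adj p q := by
  rw [colorGraph, SimpleGraph.fromRel_adj]
  exact ⟨h1, Or.inl h2⟩

lemma exists_mono_copy {R m n : ℕ} (c : Sym2 (Fin R) → Bool) (b : Bool) (x y : Fin R)
    (hxy : x ≠ y) (hc : c s(x, y) = b)
    (hx : m + n + 1 ≤ (nbhd c x b).card)
    (hy : m + 1 ≤ (nbhd c y b).card) :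
    HasMonoCopy (bistar m n) c := by
  classical
  have hcyx : c s(y, x) = b := by rw [Sym2.eq_swap]; exact hc
  have hyx : x ∈ nbhd c y b := (mem_nbhd c y x b).mpr ⟨hxy, hcyx⟩
  have hXe : m ≤ ((nbhd c y b).erase x).card := by
    rw [Finset.card_erase_of_mem hyx]; omega
  obtain ⟨X, hXsub, hXcard⟩ := Finset.exists_subset_card_eq hXe
  have hXprop : ∀ w ∈ X, w ≠ x ∧ w ≠ y ∧ c s(y, w) = b := by
    intro w hw
    have h := hXsub hw
    rw [Finset.mem_erase, mem_nbhd] at h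
    exact ⟨h.1, h.2.1, h.2.2⟩
  have hYe : n ≤ ((nbhd c x b) \ insert y X).card := by
    have h1 : (insert y X).card ≤ m + 1 := by
      have := Finset.card_insert_le y X
      omega
    have h2 := Finset.le_card_sdiff (insert y X) (nbhd c x b)
    omega
  obtain ⟨Y, hYsub, hYcard⟩ := Finset.exists_subset_card_eq hYe
  have hYprop : ∀ w ∈ Y, (w ≠ x ∧ c s(x, w) = b) ∧ w ≠ y ∧ w ∉ X := by
    intro w hw
    have h := hYsub hw
    rw [Finset.mem_sdiff, mem_nbhd, Finset.mem_insert] at h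
    push_neg at h
    exact ⟨h.1, h.2⟩
  let eX := X.orderIsoOfFin hXcard
  let eY := Y.orderIsoOfFin hYcard
  let f : Fin 2 ⊕ Fin m ⊕ Fin n → Fin R :=
    Sum.elim (fun i => if i = 0 then y else x)
      (Sum.elim (fun i => (eX i : Fin R)) (fun j => (eY j : Fin R)))
  have f0 : f (Sum.inl 0) = y := by simp [f]
  have f1 : f (Sum.inl 1) = x := by
    show (if (1 : Fin 2) = 0 then y else x) = x
    rw [if_neg (by decide)]
  have fX : ∀ i, f (Sum.inr (Sum.inl i)) = (eX i : Fin R) := fun _ => rfl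
  have fY : ∀ j, f (Sum.inr (Sum.inr j)) = (eY j : Fin R) := fun _ => rfl
  have hXmem : ∀ i, (eX i : Fin R) ∈ X := fun i => (eX i).2
  have hYmem : ∀ j, (eY j : Fin R) ∈ Y := fun j => (eY j).2
  refine ⟨b, f, ?_, ?_⟩
  · -- injectivity
    intro a a' h
    rcases a with i | (i | i) <;> rcases a' with i' | (i' | i')
    · congr 1
      fin_cases i <;> fin_cases i' <;> simp_all [f]
    · exfalso
      fin_cases i <;> simp only [f0, f1, fX] at h
      · exact (hXprop _ (hXmem i')).2.1 h.symm
      · exact (hXprop _ (hXmem i')).1 h.symm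
    · exfalso
      fin_cases i <;> simp only [f0, f1, fY] at h
      · exact ((hYprop _ (hYmem i')).2.1) h.symm
      · exact ((hYprop _ (hYmem i')).1.1) h.symm
    · exfalso
      fin_cases i' <;> simp only [f0, f1, fX] at h
      · exact (hXprop _ (hXmem i)).2.1 h
      · exact (hXprop _ (hXmem i)).1 h
    · -- X X
      simp only [fX] at h
      have : i = i' := eX.injective (Subtype.coe_injective h)
      rw [this]
    · exfalso
      simp only [fX, fY] at h
      exact (hYprop _ (hYmem i')).2.2 (h ▸ hXmem i)
    · exfalso
      fin_cases i' <;> simp only [f0, f1, fY] at h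
      · exact ((hYprop _ (hYmem i)).2.1) h
      · exact ((hYprop _ (hYmem i)).1.1) h
    · exfalso
      simp only [fX, fY] at h
      exact (hYprop _ (hYmem i)).2.2 (h.symm ▸ hXmem i')
    · simp only [fY] at h
      have : i = i' := eY.injective (Subtype.coe_injective h)
      rw [this]
  · -- adjacency
    intro u v huv
    rw [bistar, SimpleGraph.fromRel_adj] at huv
    obtain ⟨hne, h⟩ := huv
    rcases h with (⟨hu, hv⟩ | ⟨hu, i, hv⟩ | ⟨hu, j, hv⟩) |
      (⟨hv, hu⟩ | ⟨hv, i, hu⟩ | ⟨hv, j, hu⟩) <;> subst hu <;> subst hv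
    · rw [f0, f1]; exact colorGraph_adj' c b y x hxy.symm hcyx
    · rw [f0, fX]
      exact colorGraph_adj' c b y _ (Ne.symm (hXprop _ (hXmem i)).2.1)
        (hXprop _ (hXmem i)).2.2
    · rw [f1, fY]
      exact colorGraph_adj' c b x _ (Ne.symm (hYprop _ (hYmem j)).1.1)
        (hYprop _ (hYmem j)).1.2
    · rw [f0, f1]; exact (colorGraph_adj' c b y x hxy.symm hcyx).symm
    · rw [f0, fX]
      exact (colorGraph_adj' c b y _ (Ne.symm (hXprop _ (hXmem i)).2.1)
        (hXprop _ (hXmem i)).2.2).symm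
    · rw [f1, fY]
      exact (colorGraph_adj' c b x _ (Ne.symm (hYprop _ (hYmem j)).1.1)
        (hYprop _ (hYmem j)).1.2).symm

theorem bounds_on_degrees (m n R : ℕ) (hmn : m ≤ n) (hR : 2 * m + n + 2 ≤ R)
    (c : Sym2 (Fin R) → Bool) (hno : ¬ HasMonoCopy (bistar m n) c) :
    ∀ (v : Fin R) (b : Bool),
      R - m - n - 1 ≤ (Finset.univ.filter (fun u : Fin R => u ≠ v ∧ c s(v, u) = b)).card ∧
      (Finset.univ.filter (fun u : Fin R => u ≠ v ∧ c s(v, u) = b)).card ≤ m + n := by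
  classical
  have stepA : ∀ (z : Fin R) (b : Bool), m + n + 1 ≤ (nbhd c z b).card →
      ∀ u ∈ nbhd c z b, (nbhd c u b).card ≤ m := by
    intro z b hz u hu
    by_contra h
    push_neg at h
    rw [mem_nbhd] at hu
    exact hno (exists_mono_copy c b z u hu.1.symm hu.2 hz h)
  have key : ∀ (v : Fin R) (b : Bool), (nbhd c v b).card ≤ m + n := by
    by_contra hk
    push_neg at hk
    obtain ⟨v, b, hv⟩ := hk
    have hv' : m + n + 1 ≤ (nbhd c v b).card := hv
    obtain ⟨u, hu⟩ := Finset.card_pos.mp (by omega : 0 < (nbhd c v b).card)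
    have hub : (nbhd c u b).card ≤ m := stepA v b hv' u hu
    have hsumu := nbhd_sum c u b
    have hu2 : m + n + 1 ≤ (nbhd c u (!b)).card := by omega
    obtain ⟨w, hw⟩ := Finset.card_pos.mp (by omega : 0 < (nbhd c u (!b)).card)
    have hwb : (nbhd c w (!b)).card ≤ m := stepA u (!b) hu2 w hw
    have hsumw := nbhd_sum c w b
    have hw2 : m + n + 1 ≤ (nbhd c w b).card := by omega
    have stepD : ∀ z ∈ nbhd c w b, (nbhd c z b).card ≤ m := stepA w b hw2
    have d1 : Disjoint (nbhd c w b) (nbhd c u (!b)) := by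
      rw [Finset.disjoint_left]
      intro z hz1 hz2
      have h1 := stepD z hz1
      have h2 := stepA u (!b) hu2 z hz2
      have h3 := nbhd_sum c z b
      omega
    have hvw : v ∉ nbhd c w b := fun h => by have := stepD v h; omega
    have hvu : v ∉ nbhd c u (!b) := by
      rw [mem_nbhd] at hu ⊢
      rintro ⟨_, h2⟩
      have : c s(u, v) = b := by rw [Sym2.eq_swap]; exact hu.2
      rw [this] at h2
      exact absurd h2 (by cases b <;> simp)
    have d2 : Disjoint (nbhd c w b ∪ nbhd c u (!b)) ({v} : Finset (Fin R)) := by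
      simp [Finset.disjoint_right, hvw, hvu]
    have hcard : ((nbhd c w b ∪ nbhd c u (!b)) ∪ {v}).card ≤ R := by
      have := Finset.card_le_card (Finset.subset_univ ((nbhd c w b ∪ nbhd c u (!b)) ∪ {v}))
      simpa using this
    rw [Finset.card_union_of_disjoint d2, Finset.card_union_of_disjoint d1,
      Finset.card_singleton] at hcard
    omega
  intro v b
  have h1 := key v b
  have h2 := key v (!b)
  have h3 := nbhd_sum c v b
  exact ⟨by show _ ≤ (nbhd c v b).card; omega, h1⟩
end
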